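/- In the algebra F the following five relations hold: y³ = xyx, yxy = x³, y²x³ = xyx²y, yx²yx = x³y², and yx⁴ = x⁴y. -/

import Mathlib

open FreeAlgebra

noncomputable section

/-- The defining relations `x³ = yxy`, `y³ = xyx` of the algebra `F`
(with `x = ι k 0`, `y = ι k 1`). -/
inductive FRel (k : Type*) [CommRing k] :
    FreeAlgebra k (Fin 2) → FreeAlgebra k (Fin 2) → Prop
  | rel1 : FRel k (ι k 0 * ι k 0 * ι k 0) (ι k 1 * ι k 0 * ι k 1)
  | rel2 : FRel k (ι k 1 * ι k 1 * ι k 1) (ι k 0 * ι k 1 * ι k 0)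

/-- The algebra `F = k⟨x,y⟩/(x³ − yxy, y³ − xyx)`. -/
abbrev FAlg (k : Type*) [CommRing k] : Type _ := RingQuot (FRel k)

/-- The generator `x` of `F`. -/
def FAlg.x (k : Type*) [CommRing k] : FAlg k :=
  RingQuot.mkAlgHom k (FRel k) (ι k 0)

/-- The generator `y` of `F`. -/
def FAlg.y (k : Type*) [CommRing k] : FAlg k :=
  RingQuot.mkAlgHom k (FRel k) (ι k 1)

section Overlaps

variable {M : Type*} [Monoid M] {x y : M}

theorem sq_mul_pow_three_eq (hx : x ^ 3 = y * x * y) (hy : y ^ 3 = x * y * x) :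
    y ^ 2 * x ^ 3 = x * y * x ^ 2 * y :=
  calc y ^ 2 * x ^ 3 = y ^ 3 * (x * y) := by
        rw [hx]; simp only [pow_succ, pow_zero, one_mul, mul_assoc]
    _ = x * y * x ^ 2 * y := by
        rw [hy]; simp only [pow_succ, pow_zero, one_mul, mul_assoc]

theorem mul_sq_mul_mul_eq (hx : x ^ 3 = y * x * y) (hy : y ^ 3 = x * y * x) :
    y * x ^ 2 * y * x = x ^ 3 * y ^ 2 :=
  calc y * x ^ 2 * y * x = y * x * y ^ 3 := by
        rw [hy]; simp only [pow_succ, pow_zero, one_mul, mul_assoc]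
    _ = x ^ 3 * y ^ 2 := by
        rw [hx]; simp only [pow_succ, pow_zero, one_mul, mul_assoc]

theorem mul_pow_four_eq_pow_five (hx : x ^ 3 = y * x * y) (hy : y ^ 3 = x * y * x) :
    y * x ^ 4 = y ^ 5 :=
  calc y * x ^ 4 = y * x ^ 3 * x := by rw [pow_succ, mul_assoc]
    _ = y ^ 2 * y ^ 3 := by
        rw [hx, hy]; simp only [pow_succ, pow_zero, one_mul, mul_assoc]
    _ = y ^ 5 := by rw [← pow_add]

theorem pow_four_mul_eq_pow_five (hx : x ^ 3 = y * x * y) (hy : y ^ 3 = x * y * x) :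
    x ^ 4 * y = y ^ 5 :=
  calc x ^ 4 * y = x * x ^ 3 * y := by rw [pow_succ', mul_assoc]
    _ = y ^ 3 * y ^ 2 := by
        rw [hx, hy]; simp only [pow_succ, pow_zero, one_mul, mul_assoc]
    _ = y ^ 5 := by rw [← pow_add]

end Overlaps

theorem FAlg.x_pow_three (k : Type*) [CommRing k] :
    FAlg.x k ^ 3 = FAlg.y k * FAlg.x k * FAlg.y k := by
  simpa only [pow_succ, pow_zero, one_mul, map_mul, FAlg.x, FAlg.y]
    using RingQuot.mkAlgHom_rel k (FRel.rel1 (k := k))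

theorem FAlg.y_pow_three (k : Type*) [CommRing k] :
    FAlg.y k ^ 3 = FAlg.x k * FAlg.y k * FAlg.x k := by
  simpa only [pow_succ, pow_zero, one_mul, map_mul, FAlg.x, FAlg.y]
    using RingQuot.mkAlgHom_rel k (FRel.rel2 (k := k))

theorem FAlg_reduction_system (k : Type*) [Field k] :
    FAlg.y k ^ 3 = FAlg.x k * FAlg.y k * FAlg.x k ∧
    FAlg.y k * FAlg.x k * FAlg.y k = FAlg.x k ^ 3 ∧
    FAlg.y k ^ 2 * FAlg.x k ^ 3 = FAlg.x k * FAlg.y k * FAlg.x k ^ 2 * FAlg.y k ∧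
    FAlg.y k * FAlg.x k ^ 2 * FAlg.y k * FAlg.x k = FAlg.x k ^ 3 * FAlg.y k ^ 2 ∧
    FAlg.y k * FAlg.x k ^ 4 = FAlg.x k ^ 4 * FAlg.y k := by
  have hx := FAlg.x_pow_three k
  have hy := FAlg.y_pow_three k
  exact ⟨hy, hx.symm, sq_mul_pow_three_eq hx hy, mul_sq_mul_mul_eq hx hy,
    (mul_pow_four_eq_pow_five hx hy).trans (pow_four_mul_eq_pow_five hx hy).symm⟩

end
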